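/- arXiv:2604.03170 — 2 statements merged into one kernel-verified Lean document; each statement's English description precedes it below -/
import Mathlib

section
/- Let X be an integrable real random variable with E[X] = 0 and P(|X| > t) ≤ min{1, 2e^{-t}} for all t ≥ 0, and let L be a standard Laplace random variable (density (1/2)e^{-|x|} on ℝ). Then X ⪯_cx c_E·L, i.e., E[f(X)] ≤ E[f(c_E·L)] for every convex f : ℝ → ℝ for which both expectations are finite, where c_E is the sharp sub-exponential comparison constant. -/
/-!
An integrable `X` is dominated in convex order by an integrable `Y` of the same mean as soon as
`E(X - u)⁺ ≤ E(Y - u)⁺` for every threshold `u`: a convex `f` is the pointwise limit of upper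
envelopes of finitely many of its tangent lines, and such an envelope is an affine function plus a
nonnegative combination of hinges `(x - u)⁺`.

For `Y = c_E L` the stop-loss transform is `(c_E/2) e^{-u/c_E}` for `u ≥ 0`, and by symmetry it
suffices to bound `E(X - u)⁺ = ∫_u^∞ P(X > t) dt` for `u ≥ 0`. Since `X` is centred,
`∫_0^∞ P(X > t) dt = E X⁺ = E X⁻`, and these two add up to at most `A_E`, so each is at most
`B_E`. As `P(X > t)` is nonincreasing and at most `s_E(t)`, this gives
`E(X - u)⁺ ≤ B_E - p_E u` for `u ≤ a_E` and
`E(X - u)⁺ ≤ ∫_u^∞ s_E = 2e^{-u}` for `u ≥ a_E`. The constant `c_E` is chosen so that the line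
`B_E - p_E u` is tangent to `(c_E/2) e^{-u/c_E}` (at `u = c_E w_E`), and `c_E ≥ 1` takes care
of `u ≥ a_E`.
-/

open MeasureTheory Real Set

/-- The standard Laplace law on `ℝ`, with density `(1/2)e^{-|x|}` w.r.t. Lebesgue measure. -/
noncomputable def laplaceMeasure : Measure ℝ :=
  (volume : Measure ℝ).withDensity fun x => ENNReal.ofReal ((1 / 2) * Real.exp (-|x|))

/-- The sub-exponential tail envelope `s_E(t) = min{1, 2e^{-t}}`. -/
noncomputable def sE (t : ℝ) : ℝ := min 1 (2 * Real.exp (-t))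

/-- `A_E = ∫₀^∞ s_E(t) dt`. -/
noncomputable def AE : ℝ := ∫ t in Set.Ioi (0 : ℝ), sE t

/-- `H_E(x) = x s_E(x) + ∫_x^∞ s_E(t) dt`. -/
noncomputable def HE (x : ℝ) : ℝ := x * sE x + ∫ t in Set.Ioi x, sE t

open Filter Topology

section TangentEnvelope

variable {f D : ℝ → ℝ}

def tangentLine (f D : ℝ → ℝ) (u x : ℝ) : ℝ := f u + D u * (x - u)

-- The upper envelope of the tangent lines at `t 0 ≤ ⋯ ≤ t m` (`tangentEnvelope_le_and_eq`),
-- written as a sum of hinges so that its expectation only involves stop-loss transforms.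
def tangentEnvelope (f D : ℝ → ℝ) (t : ℕ → ℝ) (m : ℕ) (x : ℝ) : ℝ :=
  tangentLine f D (t 0) x +
    ∑ k ∈ Finset.range m, max (tangentLine f D (t (k + 1)) x - tangentLine f D (t k) x) 0

lemma tangentLine_le_tangentEnvelope (t : ℕ → ℝ) {j m : ℕ} (hjm : j ≤ m) (x : ℝ) :
    tangentLine f D (t j) x ≤ tangentEnvelope f D t m x := by
  have htele := Finset.sum_range_sub (fun k => tangentLine f D (t k) x) j
  have hj : ∑ k ∈ Finset.range j, (tangentLine f D (t (k + 1)) x - tangentLine f D (t k) x) ≤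
      ∑ k ∈ Finset.range m, max (tangentLine f D (t (k + 1)) x - tangentLine f D (t k) x) 0 :=
    (Finset.sum_le_sum fun k _ => le_max_left _ _).trans
      (Finset.sum_le_sum_of_subset_of_nonneg (Finset.range_subset_range.2 hjm)
        fun k _ _ => le_max_right _ _)
  rw [tangentEnvelope]
  linarith

lemma tangentLine_le_tangentLine (hT : ∀ u x, tangentLine f D u x ≤ f x) (hD : Monotone D)
    {u v x : ℝ} (huv : u ≤ v) (hvx : v ≤ x) :
    tangentLine f D u x ≤ tangentLine f D v x := by
  have := hT u v
  have := mul_nonneg (sub_nonneg.2 (hD huv)) (sub_nonneg.2 hvx)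
  simp only [tangentLine] at *
  nlinarith

lemma tangentLine_le_tangentLine_of_le (hT : ∀ u x, tangentLine f D u x ≤ f x) (hD : Monotone D)
    {u v x : ℝ} (hxu : x ≤ u) (huv : u ≤ v) :
    tangentLine f D v x ≤ tangentLine f D u x := by
  have := hT v u
  have := mul_nonneg (sub_nonneg.2 (hD huv)) (sub_nonneg.2 hxu)
  simp only [tangentLine] at *
  nlinarith

lemma tangentEnvelope_le_and_eq (hT : ∀ u x, tangentLine f D u x ≤ f x) (hD : Monotone D)
    {t : ℕ → ℝ} (ht : Monotone t) (m : ℕ) :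
    (∀ x, tangentEnvelope f D t m x ≤ f x) ∧
      ∀ x, t m ≤ x → tangentEnvelope f D t m x = tangentLine f D (t m) x := by
  induction m with
  | zero => exact ⟨fun x => by simpa [tangentEnvelope] using hT _ x, fun x _ => by
      simp [tangentEnvelope]⟩
  | succ m ih =>
    have hsucc : ∀ x, tangentEnvelope f D t (m + 1) x = tangentEnvelope f D t m x +
        max (tangentLine f D (t (m + 1)) x - tangentLine f D (t m) x) 0 := fun x => by
      simp only [tangentEnvelope, Finset.sum_range_succ]; ring
    have hmm : t m ≤ t (m + 1) := ht m.le_succ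
    refine ⟨fun x => ?_, fun x hx => ?_⟩
    · rcases le_total x (t m) with hx | hx
      · rw [hsucc, max_eq_right (sub_nonpos.2 (tangentLine_le_tangentLine_of_le hT hD hx hmm)),
          add_zero]
        exact ih.1 x
      · rw [hsucc, ih.2 x hx]
        rcases le_total (tangentLine f D (t (m + 1)) x) (tangentLine f D (t m) x) with h | h
        · rw [max_eq_right (sub_nonpos.2 h), add_zero]; exact hT _ x
        · rw [max_eq_left (sub_nonneg.2 h), add_sub_cancel]; exact hT _ x
    · rw [hsucc, ih.2 x (hmm.trans hx),
        max_eq_left (sub_nonneg.2 (tangentLine_le_tangentLine hT hD hmm hx)), add_sub_cancel]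

lemma sub_tangentLine_le (hT : ∀ u x, tangentLine f D u x ≤ f x) (u x : ℝ) :
    f x - tangentLine f D u x ≤ (D x - D u) * (x - u) := by
  have := hT x u
  simp only [tangentLine] at *
  nlinarith

noncomputable def uniformGrid (n k : ℕ) : ℝ := k / n - n

lemma monotone_uniformGrid (n : ℕ) : Monotone (uniformGrid n) := fun i j hij => by
  unfold uniformGrid; gcongr

lemma uniformGrid_sq (n : ℕ) : uniformGrid n (n ^ 2) = 0 := by
  rcases eq_or_ne (n : ℝ) 0 with hn | hn
  · simp [uniformGrid, hn]
  · simp [uniformGrid, sq, hn]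

lemma exists_uniformGrid_mem {n : ℕ} (hn : 0 < n) {x : ℝ} (hx : |x| ≤ n) :
    ∃ k ≤ 2 * n ^ 2, uniformGrid n k ≤ x ∧ x - 1 / n < uniformGrid n k := by
  have hn' : (0 : ℝ) < n := by exact_mod_cast hn
  have hy : 0 ≤ (x + n) * n := mul_nonneg (by linarith [neg_abs_le x]) hn'.le
  refine ⟨⌊(x + n) * n⌋₊, ?_, ?_, ?_⟩
  · have : (⌊(x + n) * n⌋₊ : ℝ) ≤ 2 * n ^ 2 := by
      nlinarith [Nat.floor_le hy, le_abs_self x]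
    exact_mod_cast this
  · rw [uniformGrid, sub_le_iff_le_add, div_le_iff₀ hn']
    exact Nat.floor_le hy
  · rw [uniformGrid, lt_sub_iff_add_lt, lt_div_iff₀ hn']
    have hfl := Nat.lt_floor_add_one ((x + n) * n)
    have : (x - 1 / n + n) * n = (x + n) * n - 1 := by field_simp; ring
    linarith

lemma tendsto_tangentEnvelope_uniformGrid (hT : ∀ u x, tangentLine f D u x ≤ f x)
    (hD : Monotone D) (x : ℝ) :
    Tendsto (fun n => tangentEnvelope f D (uniformGrid n) (2 * n ^ 2) x) atTop (𝓝 (f x)) := by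
  have hlower : ∀ᶠ n : ℕ in atTop,
      f x - (D x - D (x - 1)) / n ≤ tangentEnvelope f D (uniformGrid n) (2 * n ^ 2) x := by
    filter_upwards [eventually_ge_atTop 1, eventually_ge_atTop ⌈|x|⌉₊] with n hn hxn
    have hn' : (1 : ℝ) ≤ n := by exact_mod_cast hn
    obtain ⟨k, hk, hkx, hxk⟩ := exists_uniformGrid_mem hn (Nat.ceil_le.1 hxn)
    have hDk : D (x - 1) ≤ D (uniformGrid n k) := hD (by
      have : 1 / (n : ℝ) ≤ 1 := by rw [div_le_one (by linarith)]; exact hn'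
      linarith)
    have hgap : (D x - D (uniformGrid n k)) * (x - uniformGrid n k) ≤
        (D x - D (x - 1)) / n := by
      rw [le_div_iff₀ (by linarith)]
      have h1 : (x - uniformGrid n k) * n ≤ 1 := by
        rw [← le_div_iff₀ (by linarith)]; linarith
      nlinarith [sub_nonneg.2 (hD hkx), sub_nonneg.2 hkx]
    linarith [sub_tangentLine_le hT (uniformGrid n k) x,
      tangentLine_le_tangentEnvelope (D := D) (f := f) (uniformGrid n) hk x]
  have hlim : Tendsto (fun n : ℕ => f x - (D x - D (x - 1)) / n) atTop (𝓝 (f x)) := by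
    simpa using tendsto_const_nhds.sub (tendsto_const_div_atTop_nhds_zero_nat (D x - D (x - 1)))
  exact tendsto_of_tendsto_of_tendsto_of_le_of_le' hlim tendsto_const_nhds hlower
    (Eventually.of_forall fun n => (tangentEnvelope_le_and_eq hT hD (monotone_uniformGrid n) _).1 x)

end TangentEnvelope

lemma ConvexOn.tangentLine_rightDeriv_le {f : ℝ → ℝ} (hf : ConvexOn ℝ univ f) (u x : ℝ) :
    tangentLine f (fun y => derivWithin f (Ioi y) y) u x ≤ f x := by
  have hu : u ∈ interior univ := by simp
  rcases lt_trichotomy u x with h | rfl | h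
  · have := hf.rightDeriv_le_slope_of_mem_interior hu (mem_univ x) h
    rw [slope_def_field, le_div_iff₀ (sub_pos.2 h)] at this
    simp only [tangentLine]; linarith
  · simp [tangentLine]
  · have := (hf.slope_le_leftDeriv_of_mem_interior (mem_univ x) hu h).trans
      (hf.leftDeriv_le_rightDeriv_of_mem_interior hu)
    rw [slope_def_field, div_le_iff₀ (sub_pos.2 h)] at this
    simp only [tangentLine]; linarith

lemma ConvexOn.monotone_rightDeriv {f : ℝ → ℝ} (hf : ConvexOn ℝ univ f) :
    Monotone fun y => derivWithin f (Ioi y) y := by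
  simpa using hf.monotoneOn_rightDeriv

section StopLoss

variable {Ω Ω' : Type*} [MeasurableSpace Ω] [MeasurableSpace Ω'] {μ : Measure Ω} {ν : Measure Ω'}
  {X : Ω → ℝ} {Y : Ω' → ℝ}

lemma integrable_affine_add_sum_pos_part (hX : Integrable X μ) [IsFiniteMeasure μ]
    (a b : ℝ) (α β : ℕ → ℝ) (m : ℕ) :
    Integrable (fun ω => a * X ω + b + ∑ k ∈ Finset.range m, max (α k * X ω + β k) 0) μ :=
  ((hX.const_mul a).add (integrable_const b)).add
    (integrable_finsetSum _ fun _ _ => ((hX.const_mul _).add (integrable_const _)).pos_part)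

lemma integral_affine_add_sum_pos_part (hX : Integrable X μ) [IsProbabilityMeasure μ]
    (a b : ℝ) (α β : ℕ → ℝ) (m : ℕ) :
    ∫ ω, (a * X ω + b + ∑ k ∈ Finset.range m, max (α k * X ω + β k) 0) ∂μ =
      a * ∫ ω, X ω ∂μ + b + ∑ k ∈ Finset.range m, ∫ ω, max (α k * X ω + β k) 0 ∂μ := by
  have hpos : ∀ k, Integrable (fun ω => max (α k * X ω + β k) 0) μ := fun k =>
    ((hX.const_mul _).add (integrable_const _)).pos_part
  have haff : Integrable (fun ω => a * X ω + b) μ := (hX.const_mul a).add (integrable_const b)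
  rw [integral_add haff (integrable_finsetSum _ fun k _ => hpos k),
    integral_add (hX.const_mul a) (integrable_const b), integral_const_mul,
    integral_finsetSum _ fun k _ => hpos k]
  simp

lemma integral_pos_part_affine_le [IsProbabilityMeasure μ] [IsProbabilityMeasure ν]
    (hstop : ∀ u, ∫ ω, max (X ω - u) 0 ∂μ ≤ ∫ ω, max (Y ω - u) 0 ∂ν) {a : ℝ} (ha : 0 ≤ a)
    (b : ℝ) : ∫ ω, max (a * X ω + b) 0 ∂μ ≤ ∫ ω, max (a * Y ω + b) 0 ∂ν := by
  rcases ha.eq_or_lt with rfl | ha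
  · simp
  have hscale : ∀ z, max (a * z + b) 0 = a * max (z - -b / a) 0 := fun z => by
    rw [mul_max_of_nonneg _ _ ha.le, mul_zero, mul_sub, mul_div_cancel₀ _ ha.ne', sub_neg_eq_add]
  simp only [hscale, integral_const_mul]
  exact mul_le_mul_of_nonneg_left (hstop _) ha.le

lemma tangentEnvelope_eq_affine_add_sum (f D : ℝ → ℝ) (t : ℕ → ℝ) (m : ℕ) (x : ℝ) :
    tangentEnvelope f D t m x = D (t 0) * x + (f (t 0) - D (t 0) * t 0) +
      ∑ k ∈ Finset.range m, max ((D (t (k + 1)) - D (t k)) * x +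
        (f (t (k + 1)) - D (t (k + 1)) * t (k + 1) - (f (t k) - D (t k) * t k))) 0 := by
  simp only [tangentEnvelope, tangentLine]
  congr 1
  · ring
  · exact Finset.sum_congr rfl fun k _ => by ring_nf

lemma integrable_tangentEnvelope_comp [IsFiniteMeasure μ] (hX : Integrable X μ)
    (f D : ℝ → ℝ) (t : ℕ → ℝ) (m : ℕ) :
    Integrable (fun ω => tangentEnvelope f D t m (X ω)) μ := by
  simp only [tangentEnvelope_eq_affine_add_sum]
  exact integrable_affine_add_sum_pos_part hX _ _ _ _ _

lemma integral_tangentEnvelope_le [IsProbabilityMeasure μ] [IsProbabilityMeasure ν]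
    (hX : Integrable X μ) (hY : Integrable Y ν) (hmean : ∫ ω, X ω ∂μ = ∫ ω, Y ω ∂ν)
    (hstop : ∀ u, ∫ ω, max (X ω - u) 0 ∂μ ≤ ∫ ω, max (Y ω - u) 0 ∂ν)
    {f D : ℝ → ℝ} (hD : Monotone D) {t : ℕ → ℝ} (ht : Monotone t) (m : ℕ) :
    ∫ ω, tangentEnvelope f D t m (X ω) ∂μ ≤ ∫ ω, tangentEnvelope f D t m (Y ω) ∂ν := by
  simp only [tangentEnvelope_eq_affine_add_sum, integral_affine_add_sum_pos_part hX,
    integral_affine_add_sum_pos_part hY, hmean]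
  gcongr with k
  exact integral_pos_part_affine_le hstop (sub_nonneg.2 (hD (ht k.le_succ))) _

theorem ConvexOn.integral_comp_le_of_stopLoss [IsProbabilityMeasure μ] [IsProbabilityMeasure ν]
    {f : ℝ → ℝ} (hf : ConvexOn ℝ univ f) (hX : Integrable X μ) (hY : Integrable Y ν)
    (hmean : ∫ ω, X ω ∂μ = ∫ ω, Y ω ∂ν)
    (hstop : ∀ u, ∫ ω, max (X ω - u) 0 ∂μ ≤ ∫ ω, max (Y ω - u) 0 ∂ν)
    (hfX : Integrable (fun ω => f (X ω)) μ) (hfY : Integrable (fun ω => f (Y ω)) ν) :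
    ∫ ω, f (X ω) ∂μ ≤ ∫ ω, f (Y ω) ∂ν := by
  set D := fun y => derivWithin f (Ioi y) y
  have hT := hf.tangentLine_rightDeriv_le
  have hD := hf.monotone_rightDeriv
  set g := fun n : ℕ => tangentEnvelope f D (uniformGrid n) (2 * n ^ 2)
  have hg_le : ∀ n x, g n x ≤ f x := fun n =>
    (tangentEnvelope_le_and_eq hT hD (monotone_uniformGrid n) _).1
  have hg_ge : ∀ n x, tangentLine f D 0 x ≤ g n x := fun n x => by
    simpa [uniformGrid_sq] using tangentLine_le_tangentEnvelope (f := f) (D := D) (uniformGrid n)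
      (by nlinarith : n ^ 2 ≤ 2 * n ^ 2) x
  have hline : Integrable (fun ω => tangentLine f D 0 (X ω)) μ :=
    (integrable_const (f 0)).add ((hX.sub (integrable_const 0)).const_mul (D 0))
  have hlim : Tendsto (fun n => ∫ ω, g n (X ω) ∂μ) atTop (𝓝 (∫ ω, f (X ω) ∂μ)) := by
    refine tendsto_integral_of_dominated_convergence
      (fun ω => |f (X ω)| + |tangentLine f D 0 (X ω)|)
      (fun n => (integrable_tangentEnvelope_comp hX _ _ _ _).aestronglyMeasurable)
      (hfX.abs.add hline.abs) (fun n => ?_)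
      (Eventually.of_forall fun ω => tendsto_tangentEnvelope_uniformGrid hT hD _)
    refine Eventually.of_forall fun ω => abs_le.2 ⟨?_, ?_⟩
    · linarith [hg_ge n (X ω), neg_abs_le (tangentLine f D 0 (X ω)), abs_nonneg (f (X ω))]
    · linarith [hg_le n (X ω), le_abs_self (f (X ω)), abs_nonneg (tangentLine f D 0 (X ω))]
  refine le_of_tendsto' hlim fun n => ?_
  calc ∫ ω, g n (X ω) ∂μ ≤ ∫ ω, g n (Y ω) ∂ν :=
        integral_tangentEnvelope_le hX hY hmean hstop hD (monotone_uniformGrid n) _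
    _ ≤ ∫ ω, f (Y ω) ∂ν :=
        integral_mono (integrable_tangentEnvelope_comp hY _ _ _ _) hfY fun y => hg_le n (Y y)

end StopLoss

section StopLossSymmetric

variable {Ω Ω' : Type*} [MeasurableSpace Ω] [MeasurableSpace Ω'] {μ : Measure Ω} {ν : Measure Ω'}
  [IsProbabilityMeasure μ] [IsProbabilityMeasure ν] {X : Ω → ℝ} {Y : Ω' → ℝ}

lemma integral_pos_part_sub_eq_neg (hX : Integrable X μ) (u : ℝ) :
    ∫ ω, max (X ω - u) 0 ∂μ = ∫ ω, max (-X ω - -u) 0 ∂μ + (∫ ω, X ω ∂μ - u) := by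
  have hsplit : ∀ ω, max (X ω - u) 0 = max (-X ω - -u) 0 + (X ω - u) := fun ω => by
    rcases le_total (X ω) u with h | h
    · rw [max_eq_right (by linarith), max_eq_left (by linarith)]; ring
    · rw [max_eq_left (by linarith), max_eq_right (by linarith)]; ring
  have hneg : Integrable (fun ω => max (-X ω - -u) 0) μ :=
    (hX.neg.sub (integrable_const _)).pos_part
  have hsub : Integrable (fun ω => X ω - u) μ := hX.sub (integrable_const u)
  simp only [hsplit]
  rw [integral_add hneg hsub, integral_sub hX (integrable_const u), integral_const]
  simp

-- `(x - u)⁺ = (-x - -u)⁺ + (x - u)` turns negative thresholds for `X` into positive ones for `-X`.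
lemma integral_pos_part_sub_le_of_nonneg (hX : Integrable X μ) (hY : Integrable Y ν)
    (hmean : ∫ ω, X ω ∂μ = ∫ ω, Y ω ∂ν)
    (hpos : ∀ u, 0 ≤ u → ∫ ω, max (X ω - u) 0 ∂μ ≤ ∫ ω, max (Y ω - u) 0 ∂ν)
    (hneg : ∀ u, 0 ≤ u → ∫ ω, max (-X ω - u) 0 ∂μ ≤ ∫ ω, max (-Y ω - u) 0 ∂ν) (u : ℝ) :
    ∫ ω, max (X ω - u) 0 ∂μ ≤ ∫ ω, max (Y ω - u) 0 ∂ν := by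
  rcases le_total 0 u with hu | hu
  · exact hpos u hu
  · rw [integral_pos_part_sub_eq_neg hX, integral_pos_part_sub_eq_neg hY, hmean]
    linarith [hneg (-u) (neg_nonneg.2 hu)]

end StopLossSymmetric

lemma setIntegral_Ioi_le_of_antitone {q : ℝ → ℝ} (hq : Antitone q) (hint : IntegrableOn q (Ioi 0))
    {u a p B : ℝ} (hu : 0 ≤ u) (hua : u ≤ a) (htotal : ∫ t in Ioi 0, q t ≤ B)
    (htail : ∫ t in Ioi a, q t ≤ B - a * p) :
    ∫ t in Ioi u, q t ≤ B - u * p := by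
  have hint_u := hint.mono_set (Ioi_subset_Ioi hu)
  have hint_a := hint.mono_set (Ioi_subset_Ioi (hu.trans hua))
  have hhead : u * q u ≤ ∫ t in (0 : ℝ)..u, q t := by
    have := intervalIntegral.integral_mono_on hu (intervalIntegrable_const (μ := volume))
      hq.intervalIntegrable fun t ht => hq ht.2
    simpa [mul_comm] using this
  have hmid : ∫ t in u..a, q t ≤ (a - u) * q u := by
    have := intervalIntegral.integral_mono_on hua hq.intervalIntegrable
      (intervalIntegrable_const (μ := volume)) fun t ht => hq ht.1
    simpa using this
  have hsplit_head := intervalIntegral.integral_interval_add_Ioi hint hint_u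
  have hsplit_mid := intervalIntegral.integral_interval_add_Ioi hint_u hint_a
  -- If `q u ≤ p`, bound the mass on `(u, a]` by `(a - u) p`; otherwise the mass on `(0, u]`
  -- already exceeds `u p`.
  rcases le_total (q u) p with hqp | hqp
  · nlinarith
  · nlinarith

section TailIntegrals

variable {Ω : Type*} [MeasurableSpace Ω] {μ : Measure Ω} [IsFiniteMeasure μ] {X : Ω → ℝ}

lemma integral_pos_part_sub_eq_setIntegral (hX : Integrable X μ) (u : ℝ) :
    ∫ ω, max (X ω - u) 0 ∂μ = ∫ t in Ioi u, μ.real {ω | t < X ω} := by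
  have hint : Integrable (fun ω => max (X ω - u) 0) μ := (hX.sub (integrable_const u)).pos_part
  rw [hint.integral_eq_integral_meas_lt (Eventually.of_forall fun ω => le_max_right _ _)]
  have hshift := (measurePreserving_add_left volume u).setIntegral_preimage_emb
    (measurableEmbedding_addLeft u) (fun t => μ.real {ω | t < X ω}) (Ioi u)
  rw [preimage_const_add_Ioi, sub_self] at hshift
  rw [← hshift]
  refine setIntegral_congr_fun measurableSet_Ioi fun t (ht : 0 < t) => ?_
  congr 1
  ext ω
  simp only [mem_ofPred_eq, lt_max_iff, not_lt.2 ht.le, or_false]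
  constructor <;> intro h <;> linarith

lemma antitone_measureReal_lt : Antitone fun t => μ.real {ω | t < X ω} :=
  fun _ _ hst => measureReal_mono fun _ h => lt_of_le_of_lt hst h

lemma measureReal_lt_add_measureReal_neg_lt_le (hX : AEMeasurable X μ) {t : ℝ} (ht : 0 ≤ t) :
    μ.real {ω | t < X ω} + μ.real {ω | t < -X ω} ≤ μ.real {ω | t < |X ω|} := by
  have hmeas : NullMeasurableSet {ω | t < -X ω} μ :=
    hX.neg.nullMeasurableSet_preimage measurableSet_Ioi
  rw [← measureReal_union₀ hmeas (Disjoint.aedisjoint (disjoint_left.2 fun ω h1 h2 => by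
    simp only [mem_ofPred_eq] at h1 h2; linarith))]
  refine measureReal_mono fun ω h => ?_
  rcases h with (h : t < X ω) | (h : t < -X ω)
  · exact h.trans_le (le_abs_self _)
  · exact h.trans_le (neg_le_abs _)

variable {s : ℝ → ℝ}

lemma measureReal_lt_le (htail : ∀ t, 0 ≤ t → μ.real {ω | t < |X ω|} ≤ s t) {t : ℝ}
    (ht : 0 ≤ t) : μ.real {ω | t < X ω} ≤ s t :=
  (measureReal_mono (s₂ := {ω | t < |X ω|}) fun ω (h : t < X ω) =>
    h.trans_le (le_abs_self _)).trans (htail t ht)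

lemma integrableOn_measureReal_lt (hs : IntegrableOn s (Ioi 0))
    (htail : ∀ t, 0 ≤ t → μ.real {ω | t < |X ω|} ≤ s t) :
    IntegrableOn (fun t => μ.real {ω | t < X ω}) (Ioi 0) :=
  hs.mono' antitone_measureReal_lt.measurable.aestronglyMeasurable.restrict
    ((ae_restrict_iff' measurableSet_Ioi).2 (Eventually.of_forall fun t (ht : 0 < t) => by
      rw [Real.norm_eq_abs, abs_of_nonneg measureReal_nonneg]
      exact measureReal_lt_le htail ht.le))

lemma setIntegral_measureReal_lt_le (hs : IntegrableOn s (Ioi 0))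
    (htail : ∀ t, 0 ≤ t → μ.real {ω | t < |X ω|} ≤ s t) {v : ℝ} (hv : 0 ≤ v) :
    ∫ t in Ioi v, μ.real {ω | t < X ω} ≤ ∫ t in Ioi v, s t :=
  setIntegral_mono_on ((integrableOn_measureReal_lt hs htail).mono_set (Ioi_subset_Ioi hv))
    (hs.mono_set (Ioi_subset_Ioi hv)) measurableSet_Ioi fun t (ht : v < t) =>
      measureReal_lt_le htail (hv.trans ht.le)

-- For centred `X`, `∫ P(X > t) = E X⁺ = E X⁻ = ∫ P(-X > t)`, while the two tails add up to at
-- most `s`.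
lemma setIntegral_measureReal_lt_le_half (hX : Integrable X μ) (hmean : ∫ ω, X ω ∂μ = 0)
    (hs : IntegrableOn s (Ioi 0)) (htail : ∀ t, 0 ≤ t → μ.real {ω | t < |X ω|} ≤ s t) :
    ∫ t in Ioi 0, μ.real {ω | t < X ω} ≤ (∫ t in Ioi 0, s t) / 2 := by
  have htail' : ∀ t, 0 ≤ t → μ.real {ω | t < |-X ω|} ≤ s t := by simpa only [abs_neg] using htail
  have hq := integrableOn_measureReal_lt hs htail
  have hm := integrableOn_measureReal_lt (X := fun ω => -X ω) hs htail'
  have hbalance : ∫ t in Ioi 0, μ.real {ω | t < X ω} = ∫ t in Ioi 0, μ.real {ω | t < -X ω} := by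
    have hsplit : ∀ x : ℝ, max (x - 0) 0 - max (-x - 0) 0 = x := fun x => by
      rcases le_total x 0 with h | h <;> simp [h]
    have hpos : Integrable (fun ω => max (X ω - 0) 0) μ := (hX.sub (integrable_const 0)).pos_part
    have hneg : Integrable (fun ω => max (-X ω - 0) 0) μ :=
      (hX.neg.sub (integrable_const 0)).pos_part
    have := integral_sub hpos hneg
    simp only [hsplit, hmean] at this
    rw [← integral_pos_part_sub_eq_setIntegral hX,
      ← integral_pos_part_sub_eq_setIntegral (X := fun ω => -X ω) hX.neg]
    linarith
  have hsum : ∫ t in Ioi 0, (μ.real {ω | t < X ω} + μ.real {ω | t < -X ω}) ≤ ∫ t in Ioi 0, s t :=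
    setIntegral_mono_on (hq.add hm) hs measurableSet_Ioi fun t ht =>
      (measureReal_lt_add_measureReal_neg_lt_le hX.aemeasurable ht.le).trans (htail t ht.le)
  rw [integral_add hq hm, ← hbalance] at hsum
  linarith

theorem integral_pos_part_sub_le_of_tail (hX : Integrable X μ) (hmean : ∫ ω, X ω ∂μ = 0)
    (hs : IntegrableOn s (Ioi 0)) (htail : ∀ t, 0 ≤ t → μ.real {ω | t < |X ω|} ≤ s t)
    {ψ : ℝ → ℝ} {a : ℝ} (hHa : a * s a + ∫ t in Ioi a, s t = (∫ t in Ioi 0, s t) / 2)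
    (hnear : ∀ t, (∫ t in Ioi 0, s t) / 2 - t * s a ≤ ψ t)
    (hfar : ∀ t, a ≤ t → ∫ x in Ioi t, s x ≤ ψ t) {u : ℝ} (hu : 0 ≤ u) :
    ∫ ω, max (X ω - u) 0 ∂μ ≤ ψ u := by
  rw [integral_pos_part_sub_eq_setIntegral hX]
  rcases le_total u a with hua | hau
  · refine (setIntegral_Ioi_le_of_antitone antitone_measureReal_lt
      (integrableOn_measureReal_lt hs htail) hu hua
      (setIntegral_measureReal_lt_le_half hX hmean hs htail) ?_).trans (hnear u)
    linarith [setIntegral_measureReal_lt_le hs htail (hu.trans hua)]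
  · exact (setIntegral_measureReal_lt_le hs htail hu).trans (hfar u hau)

end TailIntegrals

section Envelope

lemma sE_nonneg (t : ℝ) : 0 ≤ sE t := le_min zero_le_one (by positivity)

lemma two_mul_exp_neg (t : ℝ) : 2 * exp (-t) = exp (log 2 - t) := by
  rw [exp_sub, exp_log two_pos, exp_neg, div_eq_mul_inv]

lemma sE_of_le_log_two {t : ℝ} (ht : t ≤ log 2) : sE t = 1 :=
  min_eq_left (two_mul_exp_neg t ▸ one_le_exp (by linarith))

lemma sE_of_log_two_le {t : ℝ} (ht : log 2 ≤ t) : sE t = 2 * exp (-t) :=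
  min_eq_right (two_mul_exp_neg t ▸ exp_le_one_iff.2 (by linarith))

lemma integrableOn_sE (x : ℝ) : IntegrableOn sE (Ioi x) :=
  ((integrableOn_exp_neg_Ioi x).const_mul 2).mono'
    (by unfold sE; fun_prop : Continuous sE).aestronglyMeasurable
    (Eventually.of_forall fun t => by
      rw [Real.norm_eq_abs, abs_of_nonneg (sE_nonneg t)]; exact min_le_right _ _)

lemma setIntegral_sE_of_log_two_le {x : ℝ} (hx : log 2 ≤ x) :
    ∫ t in Ioi x, sE t = 2 * exp (-x) := by
  rw [setIntegral_congr_fun measurableSet_Ioi fun t (ht : x < t) =>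
    sE_of_log_two_le (hx.trans ht.le), integral_const_mul, integral_exp_neg_Ioi]

lemma setIntegral_sE_of_le_log_two {x : ℝ} (hx : x ≤ log 2) :
    ∫ t in Ioi x, sE t = log 2 - x + 1 := by
  rw [← intervalIntegral.integral_interval_add_Ioi (integrableOn_sE x) (integrableOn_sE _),
    setIntegral_sE_of_log_two_le le_rfl, intervalIntegral.integral_congr (g := fun _ => 1)
      fun t ht => sE_of_le_log_two (by rw [uIcc_of_le hx] at ht; exact ht.2)]
  simp [exp_neg, exp_log two_pos]

lemma AE_eq : AE = log 2 + 1 := by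
  rw [AE, setIntegral_sE_of_le_log_two (log_nonneg one_le_two)]
  ring

lemma HE_of_log_two_le {a : ℝ} (ha : log 2 ≤ a) : HE a = 2 * exp (-a) * (a + 1) := by
  rw [HE, sE_of_log_two_le ha, setIntegral_sE_of_log_two_le ha]
  ring

lemma log_two_le_of_HE_eq {a : ℝ} (h : HE a = AE / 2) : log 2 ≤ a := by
  by_contra! ha
  rw [HE, sE_of_le_log_two ha.le, setIntegral_sE_of_le_log_two ha.le, AE_eq] at h
  linarith [log_nonneg one_le_two]

end Envelope

-- `c p` times `1 + y ≤ exp y` at `y = w - t/c`.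
lemma sub_mul_le_half_mul_exp {p w c B : ℝ} (hp : 0 < p) (hw : exp w = 1 / (2 * p))
    (hc : 0 < c) (hB : B = c * (p * (1 + w))) (t : ℝ) : B - t * p ≤ c / 2 * exp (-t / c) := by
  have htangent := add_one_le_exp (w - t / c)
  rw [sub_eq_add_neg, exp_add, hw, ← neg_div] at htangent
  have := mul_le_mul_of_nonneg_left htangent (by positivity : 0 ≤ c * p)
  rw [hB]
  field_simp at this ⊢
  nlinarith

lemma two_mul_exp_neg_le_of_le {a c t : ℝ} (hc : 1 ≤ c)
    (ha : 2 * exp (-a) ≤ c / 2 * exp (-a / c)) (hat : a ≤ t) :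
    2 * exp (-t) ≤ c / 2 * exp (-t / c) := by
  have hdecay : exp (-(t - a)) ≤ exp (-(t - a) / c) := by
    rw [exp_le_exp, neg_div, neg_le_neg_iff, div_le_iff₀ (by linarith)]
    nlinarith
  calc 2 * exp (-t) = 2 * exp (-a) * exp (-(t - a)) := by rw [mul_assoc, ← exp_add]; ring_nf
    _ ≤ c / 2 * exp (-a / c) * exp (-(t - a) / c) := by gcongr
    _ = c / 2 * exp (-t / c) := by rw [mul_assoc, ← exp_add]; ring_nf

section Constants

variable {aE pE wE cE : ℝ}

lemma wE_eq (hpE : pE = 2 * exp (-aE)) (hwE : wE = log (1 / (2 * pE))) :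
    wE = aE - log 4 := by
  rw [hwE, hpE, show (1 : ℝ) / (2 * (2 * exp (-aE))) = exp aE / 4 by
    rw [exp_neg]; field_simp; norm_num, log_div (exp_ne_zero _) (by norm_num), log_exp]

lemma one_add_wE_pos (ha : log 2 ≤ aE) (hpE : pE = 2 * exp (-aE))
    (hwE : wE = log (1 / (2 * pE))) : 0 < 1 + wE := by
  have h4 : log 4 = 2 * log 2 := by
    rw [show (4 : ℝ) = 2 ^ 2 by norm_num, log_pow]; push_cast; ring
  rw [wE_eq hpE hwE, h4]
  linarith [log_two_lt_d9]

lemma half_AE_eq (hHaE : HE aE = AE / 2) (hpE : pE = 2 * exp (-aE)) :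
    AE / 2 = pE * (aE + 1) := by
  rw [← hHaE, HE_of_log_two_le (log_two_le_of_HE_eq hHaE), hpE]

lemma half_AE_eq_cE_mul (hHaE : HE aE = AE / 2) (hpE : pE = 2 * exp (-aE))
    (hwE : wE = log (1 / (2 * pE))) (hcE : cE = (AE / 2) / (pE * (1 + wE))) :
    AE / 2 = cE * (pE * (1 + wE)) := by
  have := one_add_wE_pos (log_two_le_of_HE_eq hHaE) hpE hwE
  rw [hcE, div_mul_cancel₀ _ (by rw [hpE]; positivity)]

lemma one_le_cE (hHaE : HE aE = AE / 2) (hpE : pE = 2 * exp (-aE))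
    (hwE : wE = log (1 / (2 * pE))) (hcE : cE = (AE / 2) / (pE * (1 + wE))) : 1 ≤ cE := by
  have hw := one_add_wE_pos (log_two_le_of_HE_eq hHaE) hpE hwE
  have hp : 0 < pE := by rw [hpE]; positivity
  rw [hcE, half_AE_eq hHaE hpE, le_div_iff₀ (by positivity), one_mul]
  have := wE_eq hpE hwE
  have : 0 < log 4 := log_pos (by norm_num)
  nlinarith

theorem integral_pos_part_sub_le_of_tail_le_sE (hHaE : HE aE = AE / 2)
    (hpE : pE = 2 * exp (-aE)) (hwE : wE = log (1 / (2 * pE)))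
    (hcE : cE = (AE / 2) / (pE * (1 + wE)))
    {Ω : Type*} [MeasurableSpace Ω] {μ : Measure Ω} [IsFiniteMeasure μ] {X : Ω → ℝ}
    (hX : Integrable X μ) (hmean : ∫ ω, X ω ∂μ = 0)
    (htail : ∀ t : ℝ, 0 ≤ t → μ {ω | t < |X ω|} ≤ ENNReal.ofReal (sE t)) {u : ℝ} (hu : 0 ≤ u) :
    ∫ ω, max (X ω - u) 0 ∂μ ≤ cE / 2 * exp (-u / cE) := by
  have ha := log_two_le_of_HE_eq hHaE
  have hc := one_le_cE hHaE hpE hwE hcE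
  have hnear : ∀ t, AE / 2 - t * sE aE ≤ cE / 2 * exp (-t / cE) := fun t => by
    rw [sE_of_log_two_le ha, ← hpE]
    exact sub_mul_le_half_mul_exp (by rw [hpE]; positivity)
      (by rw [hwE, exp_log (by rw [hpE]; positivity)]) (by linarith)
      (half_AE_eq_cE_mul hHaE hpE hwE hcE) t
  have hat : 2 * exp (-aE) ≤ cE / 2 * exp (-aE / cE) := by
    have := hnear aE
    rw [sE_of_log_two_le ha, half_AE_eq hHaE hpE, hpE] at this
    linarith
  exact integral_pos_part_sub_le_of_tail hX hmean (integrableOn_sE 0)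
    (fun t ht => ENNReal.toReal_le_of_le_ofReal (sE_nonneg t) (htail t ht)) hHaE hnear
    (fun t hta => (setIntegral_sE_of_log_two_le (ha.trans hta)).trans_le
      (two_mul_exp_neg_le_of_le hc hat hta)) hu

end Constants

section Laplace

lemma integrable_of_even {g : ℝ → ℝ} (heven : ∀ x, g (-x) = g x) (hg : IntegrableOn g (Ioi 0)) :
    Integrable g := by
  have hIic : IntegrableOn g (Iic 0) := by
    simpa only [heven] using IntegrableOn.comp_neg_Iic (μ := volume) (c := (0 : ℝ)) (f := g)
      (by rwa [neg_zero, integrableOn_Ici_iff_integrableOn_Ioi])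
  rw [← integrableOn_univ, ← Iic_union_Ioi (a := (0 : ℝ))]
  exact hIic.union hg

instance : laplaceMeasure.IsNegInvariant := by
  constructor
  ext s hs
  rw [Measure.neg, Measure.map_apply measurable_neg hs, laplaceMeasure,
    withDensity_apply _ (measurable_neg hs), withDensity_apply _ hs,
    ← (Measure.measurePreserving_neg volume).setLIntegral_comp_preimage hs (by fun_prop)]
  simp only [abs_neg]

instance : IsProbabilityMeasure laplaceMeasure := by
  have hint : Integrable fun x : ℝ => 1 / 2 * exp (-|x|) :=
    integrable_of_even (fun x => by rw [abs_neg])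
      ((show IntegrableOn (fun x : ℝ => 1 / 2 * exp (-x)) (Ioi 0) volume from
        (integrableOn_exp_neg_Ioi 0).const_mul (1 / 2)).congr_fun
        (fun x (hx : 0 < x) => by rw [abs_of_pos hx]) measurableSet_Ioi)
  constructor
  rw [laplaceMeasure, withDensity_apply _ MeasurableSet.univ, Measure.restrict_univ,
    ← ofReal_integral_eq_lintegral_ofReal hint (Eventually.of_forall fun x => by positivity),
    integral_comp_abs (f := fun y => 1 / 2 * exp (-y)), integral_const_mul,
    integral_exp_neg_Ioi_zero]
  norm_num

lemma integral_laplaceMeasure (g : ℝ → ℝ) :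
    ∫ x, g x ∂laplaceMeasure = ∫ x, 1 / 2 * exp (-|x|) * g x := by
  rw [laplaceMeasure, integral_withDensity_eq_integral_toReal_smul (by fun_prop)
    (Eventually.of_forall fun _ => ENNReal.ofReal_lt_top)]
  simp only [ENNReal.toReal_ofReal (by positivity : (0 : ℝ) ≤ 1 / 2 * exp (-|_|)), smul_eq_mul]

lemma integrable_laplaceMeasure_iff {g : ℝ → ℝ} :
    Integrable g laplaceMeasure ↔ Integrable fun x => 1 / 2 * exp (-|x|) * g x := by
  rw [laplaceMeasure, integrable_withDensity_iff_integrable_smul' (by fun_prop)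
    (Eventually.of_forall fun _ => ENNReal.ofReal_lt_top)]
  simp only [ENNReal.toReal_ofReal (by positivity : (0 : ℝ) ≤ 1 / 2 * exp (-|_|)), smul_eq_mul]

lemma integrable_and_integral_pos_part_mul_sub_laplaceMeasure {c u : ℝ} (hc : 0 < c) (hu : 0 ≤ u) :
    Integrable (fun x => max (c * x - u) 0) laplaceMeasure ∧
      ∫ x, max (c * x - u) 0 ∂laplaceMeasure = c / 2 * exp (-u / c) := by
  set F : ℝ → ℝ := fun x => -(1 / 2) * exp (-x) * (c * x - u + c)
  set F' : ℝ → ℝ := fun x => 1 / 2 * exp (-x) * (c * x - u)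
  have hderiv : ∀ x, HasDerivAt F (F' x) x := fun x => by
    have h1 : HasDerivAt (fun y => exp (-y)) (-exp (-x)) x := by simpa using (hasDerivAt_neg x).exp
    have h2 : HasDerivAt (fun y => c * y - u + c) c x := by
      simpa using (((hasDerivAt_id x).const_mul c).sub_const u).add_const c
    refine (((h1.mul h2).const_mul (-(1 / 2) : ℝ)).congr_deriv (by ring)).congr_of_eventuallyEq
      (Eventually.of_forall fun y => ?_)
    simp only [F, Pi.mul_apply]; ring
  have hlim : Tendsto F atTop (𝓝 0) := by
    have h1 := (tendsto_pow_mul_exp_neg_atTop_nhds_zero 1).const_mul (-(1 / 2) * c)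
    have h2 := tendsto_exp_neg_atTop_nhds_zero.const_mul (-(1 / 2) * (c - u))
    have := h1.add h2
    rw [mul_zero, mul_zero, add_zero] at this
    refine this.congr fun x => ?_
    simp only [F, pow_one]
    ring
  have hpos : ∀ x ∈ Ioi (u / c), 0 ≤ F' x := fun x (hx : u / c < x) => by
    have : u < c * x := by rwa [div_lt_iff₀' hc] at hx
    exact mul_nonneg (by positivity) (by linarith)
  have hcont := (hderiv (u / c)).continuousAt.continuousWithinAt (s := Ici (u / c))
  have hindicator :
      ∀ x, 1 / 2 * exp (-|x|) * max (c * x - u) 0 = (Ioi (u / c)).indicator F' x := by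
    intro x
    by_cases hx : u / c < x
    · have hux : u < c * x := by rwa [div_lt_iff₀' hc] at hx
      rw [indicator_of_mem (show x ∈ Ioi (u / c) from hx),
        abs_of_pos ((div_nonneg hu hc.le).trans_lt hx), max_eq_left (by linarith)]
    · have hxu : c * x ≤ u := by rwa [not_lt, le_div_iff₀' hc] at hx
      rw [indicator_of_notMem (show x ∉ Ioi (u / c) from hx),
        max_eq_right (by linarith), mul_zero]
  constructor
  · rw [integrable_laplaceMeasure_iff, funext hindicator,
      integrable_indicator_iff measurableSet_Ioi]
    exact integrableOn_Ioi_deriv_of_nonneg hcont (fun x _ => hderiv x) hpos hlim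
  · rw [integral_laplaceMeasure, funext hindicator, integral_indicator measurableSet_Ioi,
      integral_Ioi_of_hasDerivAt_of_nonneg hcont (fun x _ => hderiv x) hpos hlim]
    simp only [F, mul_div_cancel₀ _ hc.ne']
    ring_nf

lemma integrable_id_laplaceMeasure : Integrable (fun x => x) laplaceMeasure := by
  have h := (integrable_and_integral_pos_part_mul_sub_laplaceMeasure one_pos le_rfl).1
  refine (h.sub h.comp_neg).congr (Eventually.of_forall fun x => ?_)
  rcases le_total x 0 with hx | hx <;> simp [hx]

lemma integral_id_laplaceMeasure : ∫ x, x ∂laplaceMeasure = 0 := by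
  have := integral_neg_eq_self (fun x => x) laplaceMeasure
  rw [integral_neg] at this
  linarith

end Laplace

theorem stmt13_general
    (aE pE wE cE : ℝ)
    (hHaE : HE aE = AE / 2)
    (hpE : pE = 2 * Real.exp (-aE))
    (hwE : wE = Real.log (1 / (2 * pE)))
    (hcE : cE = (AE / 2) / (pE * (1 + wE)))
    {Ω : Type*} [MeasurableSpace Ω] (μ : Measure Ω) [IsProbabilityMeasure μ]
    (X : Ω → ℝ) (hXint : Integrable X μ) (hmean : ∫ ω, X ω ∂μ = 0)
    (htail : ∀ t : ℝ, 0 ≤ t → μ {ω | t < |X ω|} ≤ ENNReal.ofReal (sE t)) :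
    ∀ f : ℝ → ℝ, ConvexOn ℝ Set.univ f →
      Integrable (fun ω => f (X ω)) μ →
      Integrable (fun x => f (cE * x)) laplaceMeasure →
      ∫ ω, f (X ω) ∂μ ≤ ∫ x, f (cE * x) ∂laplaceMeasure := by
  intro f hf hfX hfL
  have hc : 0 < cE := one_pos.trans_le (one_le_cE hHaE hpE hwE hcE)
  have hbound : ∀ Z : Ω → ℝ, Integrable Z μ → ∫ ω, Z ω ∂μ = 0 →
      (∀ t : ℝ, 0 ≤ t → μ {ω | t < |Z ω|} ≤ ENNReal.ofReal (sE t)) →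
      ∀ u, 0 ≤ u → ∫ ω, max (Z ω - u) 0 ∂μ ≤ ∫ x, max (cE * x - u) 0 ∂laplaceMeasure :=
    fun Z hZ hZmean hZtail u hu =>
      (integrable_and_integral_pos_part_mul_sub_laplaceMeasure hc hu).2 ▸
        integral_pos_part_sub_le_of_tail_le_sE hHaE hpE hwE hcE hZ hZmean hZtail hu
  have hY := integrable_id_laplaceMeasure.const_mul cE
  have hmeans : ∫ ω, X ω ∂μ = ∫ x, cE * x ∂laplaceMeasure := by
    rw [hmean, integral_const_mul, integral_id_laplaceMeasure, mul_zero]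
  refine hf.integral_comp_le_of_stopLoss hXint hY hmeans
    (integral_pos_part_sub_le_of_nonneg hXint hY hmeans (hbound X hXint hmean htail)
      fun u hu => ?_) hfX hfL
  have hsymm := integral_neg_eq_self (fun x => max (cE * x - u) 0) laplaceMeasure
  simp only [mul_neg] at hsymm
  rw [hsymm]
  exact hbound (fun ω => -X ω) hXint.neg (by rw [integral_neg, hmean, neg_zero])
    (by simpa only [abs_neg] using htail) u hu

/-- Sharp one-dimensional convex sub-exponential comparison: if `X` is integrable with
`E[X] = 0` and `P(|X| > t) ≤ min{1, 2e^{-t}}` for all `t ≥ 0`, and `L` is standard Laplace,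
then `X ⪯_cx c_E L`, where `c_E = B_E/(p_E(1 + w_E))` with `H_E(a_E) = B_E = A_E/2`,
`p_E = 2e^{-a_E}` and `w_E = log(1/(2p_E))`. -/
theorem stmt13
    (aE pE wE cE : ℝ)
    (haE : 0 < aE) (hHaE : HE aE = AE / 2)
    (hpE : pE = 2 * Real.exp (-aE))
    (hwE : wE = Real.log (1 / (2 * pE)))
    (hcE : cE = (AE / 2) / (pE * (1 + wE)))
    {Ω : Type*} [MeasurableSpace Ω] (μ : Measure Ω) [IsProbabilityMeasure μ]
    (X : Ω → ℝ) (hXint : Integrable X μ) (hmean : ∫ ω, X ω ∂μ = 0)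
    (htail : ∀ t : ℝ, 0 ≤ t → μ {ω | t < |X ω|} ≤ ENNReal.ofReal (sE t)) :
    ∀ f : ℝ → ℝ, ConvexOn ℝ Set.univ f →
      Integrable (fun ω => f (X ω)) μ →
      Integrable (fun x => f (cE * x)) laplaceMeasure →
      ∫ ω, f (X ω) ∂μ ≤ ∫ x, f (cE * x) ∂laplaceMeasure :=
  stmt13_general aE pE wE cE hHaE hpE hwE hcE μ X hXint hmean htail
end

section
/- Let c_E be the sharp sub-exponential comparison constant and L a standard Laplace random variable (density (1/2)e^{-|x|}). For every c with 0 < c < c_E there exists an integrable mean-zero random variable X⋆ with P(|X⋆| > t) ≤ min{1, 2e^{-t}} for all t ≥ 0 such that, with f(x) = max(x − c·w_E, 0), one has E[f(X⋆)] > E[f(c·L)]; in particular X⋆ is not dominated by c·L in the convex order. -/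
/-!
Let `Y = log 2 + Exp(1)`, whose tail `P(Y > t)` is exactly `s_E(t)`, and put `X⋆ = Y` on
`{Y > a_E}` and `X⋆ = -Y` otherwise. Then `|X⋆| = Y`, so `X⋆` meets the tail bound, and
`E X⋆ = 2 E[Y; Y > a_E] - E Y = 2 H_E(a_E) - A_E = 0`. For every `u`,
`E (X⋆ - u)₊ ≥ E[Y - u; Y > a_E] = B_E - u p_E`, whereas
`E (cL - c w_E)₊ = c e^{-w_E} / 2 = c p_E` because `w_E ≥ 0`. With `u = c w_E` the difference
is `B_E - c p_E (1 + w_E)`, which is positive exactly when `c < c_E`.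
-/

open MeasureTheory Real Set

open Filter Topology

section WithDensityOfReal

variable {α : Type*} [MeasurableSpace α] {μ : Measure α} {f : α → ℝ}

lemma integral_withDensity_ofReal (hf : Measurable f) (hf0 : ∀ x, 0 ≤ f x) (g : α → ℝ) :
    ∫ x, g x ∂μ.withDensity (fun x => ENNReal.ofReal (f x)) = ∫ x, f x * g x ∂μ := by
  rw [integral_withDensity_eq_integral_toReal_smul hf.ennreal_ofReal
    (ae_of_all _ fun _ => ENNReal.ofReal_lt_top)]
  simp_rw [ENNReal.toReal_ofReal (hf0 _), smul_eq_mul]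

lemma integrable_withDensity_ofReal_iff (hf : Measurable f) (hf0 : ∀ x, 0 ≤ f x)
    {g : α → ℝ} :
    Integrable g (μ.withDensity fun x => ENNReal.ofReal (f x)) ↔
      Integrable (fun x => f x * g x) μ := by
  rw [integrable_withDensity_iff_integrable_smul' hf.ennreal_ofReal
    (ae_of_all _ fun _ => ENNReal.ofReal_lt_top)]
  simp_rw [ENNReal.toReal_ofReal (hf0 _), smul_eq_mul]

end WithDensityOfReal

lemma hasDerivAt_neg_add_one_mul_exp_neg (x : ℝ) :
    HasDerivAt (fun x => -(x + 1) * exp (-x)) (x * exp (-x)) x := by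
  have h : HasDerivAt (fun y : ℝ => -(y + 1)) (-1) x := ((hasDerivAt_id' x).add_const 1).neg
  exact (h.mul (hasDerivAt_neg x).exp).congr_deriv (by ring)

lemma tendsto_neg_add_one_mul_exp_neg_atTop :
    Tendsto (fun x => -(x + 1) * exp (-x)) atTop (𝓝 0) := by
  have := ((tendsto_pow_mul_exp_neg_atTop_nhds_zero 1).add
    (tendsto_pow_mul_exp_neg_atTop_nhds_zero 0)).neg
  simp only [pow_one, pow_zero, add_zero, neg_zero] at this
  convert this using 2
  ring

lemma integrableOn_Ioi_mul_exp_neg {a : ℝ} (ha : 0 ≤ a) :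
    IntegrableOn (fun x => x * exp (-x)) (Ioi a) :=
  integrableOn_Ioi_deriv_of_nonneg' (fun x _ => hasDerivAt_neg_add_one_mul_exp_neg x)
    (fun _ hx => mul_nonneg (ha.trans hx.out.le) (exp_pos _).le)
    tendsto_neg_add_one_mul_exp_neg_atTop

lemma integral_Ioi_mul_exp_neg {a : ℝ} (ha : 0 ≤ a) :
    ∫ x in Ioi a, x * exp (-x) = (a + 1) * exp (-a) := by
  rw [integral_Ioi_of_hasDerivAt_of_tendsto' (fun x _ => hasDerivAt_neg_add_one_mul_exp_neg x)
    (integrableOn_Ioi_mul_exp_neg ha) tendsto_neg_add_one_mul_exp_neg_atTop]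
  ring

lemma integral_Ioi_sub_mul_exp_neg {a : ℝ} (ha : 0 ≤ a) (u : ℝ) :
    ∫ x in Ioi a, (x - u) * exp (-x) = (a + 1 - u) * exp (-a) := by
  simp_rw [sub_mul]
  rw [integral_sub (integrableOn_Ioi_mul_exp_neg ha)
    ((integrableOn_exp_neg_Ioi a).const_mul u), integral_const_mul, integral_Ioi_mul_exp_neg ha,
    integral_exp_neg_Ioi]

lemma lintegral_Ioi_ofReal_two_mul_exp_neg (t : ℝ) :
    ∫⁻ y in Ioi t, ENNReal.ofReal (2 * exp (-y)) = ENNReal.ofReal (2 * exp (-t)) := by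
  rw [← ofReal_integral_eq_lintegral_ofReal ((integrableOn_exp_neg_Ioi t).const_mul 2)
    (ae_of_all _ fun _ => by positivity), integral_const_mul, integral_exp_neg_Ioi]

lemma two_mul_exp_neg_log_two : 2 * exp (-log 2) = 1 := by
  rw [exp_neg, exp_log two_pos]
  norm_num

lemma sE_eq_two_mul_exp_neg_max (t : ℝ) : sE t = 2 * exp (-max t (log 2)) := by
  rcases le_total t (log 2) with h | h
  · rw [max_eq_right h, two_mul_exp_neg_log_two, sE, min_eq_left]
    rw [← two_mul_exp_neg_log_two]
    gcongr
  · rw [max_eq_left h, sE, min_eq_right]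
    rw [← two_mul_exp_neg_log_two]
    gcongr

lemma continuous_sE : Continuous sE := by
  unfold sE
  fun_prop

lemma sE_eq_one_of_le_log_two {t : ℝ} (h : t ≤ log 2) : sE t = 1 := by
  rw [sE_eq_two_mul_exp_neg_max, max_eq_right h, two_mul_exp_neg_log_two]

lemma sE_eq_of_log_two_le {t : ℝ} (h : log 2 ≤ t) : sE t = 2 * exp (-t) := by
  rw [sE_eq_two_mul_exp_neg_max, max_eq_left h]

lemma integral_Ioi_sE_of_log_two_le {x : ℝ} (h : log 2 ≤ x) :
    ∫ t in Ioi x, sE t = 2 * exp (-x) := by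
  rw [setIntegral_congr_fun measurableSet_Ioi fun t ht => sE_eq_of_log_two_le (h.trans ht.out.le),
    integral_const_mul, integral_exp_neg_Ioi]

lemma integral_Ioi_sE_of_le_log_two {x : ℝ} (h : x ≤ log 2) :
    ∫ t in Ioi x, sE t = log 2 - x + 1 := by
  have hint : IntegrableOn sE (Ioi (log 2)) :=
    IntegrableOn.congr_fun ((integrableOn_exp_neg_Ioi _).const_mul 2)
      (fun t ht => (sE_eq_of_log_two_le ht.out.le).symm) measurableSet_Ioi
  rw [← Ioc_union_Ioi_eq_Ioi h, setIntegral_union Ioc_disjoint_Ioi_same measurableSet_Ioi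
    continuous_sE.integrableOn_Ioc hint,
    setIntegral_congr_fun measurableSet_Ioc fun t ht => sE_eq_one_of_le_log_two ht.2,
    setIntegral_const, smul_eq_mul, mul_one, volume_real_Ioc_of_le h,
    integral_Ioi_sE_of_log_two_le le_rfl, two_mul_exp_neg_log_two]

lemma HE_eq_of_log_two_le {x : ℝ} (h : log 2 ≤ x) : HE x = 2 * (x + 1) * exp (-x) := by
  rw [HE, sE_eq_of_log_two_le h, integral_Ioi_sE_of_log_two_le h]
  ring

lemma HE_eq_AE_of_le_log_two {x : ℝ} (h : x ≤ log 2) : HE x = AE := by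
  rw [HE, sE_eq_one_of_le_log_two h, integral_Ioi_sE_of_le_log_two h, AE_eq]
  ring

lemma log_two_lt_of_HE_eq_half {a : ℝ} (h : HE a = AE / 2) : log 2 < a := by
  by_contra! ha
  rw [HE_eq_AE_of_le_log_two ha, AE_eq] at h
  linarith [log_nonneg one_le_two]

noncomputable def envelopeLaw : Measure ℝ :=
  (volume.restrict (Ioi (log 2))).withDensity fun y => ENNReal.ofReal (2 * exp (-y))

namespace envelopeLaw

lemma apply_Ioi (t : ℝ) : envelopeLaw (Ioi t) = ENNReal.ofReal (sE t) := by
  rw [envelopeLaw, withDensity_apply _ measurableSet_Ioi,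
    Measure.restrict_restrict measurableSet_Ioi,
    Ioi_inter_Ioi, lintegral_Ioi_ofReal_two_mul_exp_neg, sE_eq_two_mul_exp_neg_max]

instance : IsProbabilityMeasure envelopeLaw :=
  ⟨by rw [envelopeLaw, withDensity_apply _ MeasurableSet.univ, Measure.restrict_univ,
    lintegral_Ioi_ofReal_two_mul_exp_neg, two_mul_exp_neg_log_two, ENNReal.ofReal_one]⟩

lemma ae_log_two_lt : ∀ᵐ y ∂envelopeLaw, log 2 < y :=
  (withDensity_absolutelyContinuous _ _).ae_le (ae_restrict_mem measurableSet_Ioi)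

lemma integral_eq (g : ℝ → ℝ) :
    ∫ y, g y ∂envelopeLaw = ∫ y in Ioi (log 2), 2 * exp (-y) * g y :=
  integral_withDensity_ofReal (by fun_prop) (fun _ => by positivity) g

lemma integrable_id : Integrable (fun y => y) envelopeLaw := by
  rw [envelopeLaw, integrable_withDensity_ofReal_iff (by fun_prop) (fun _ => by positivity)]
  refine IntegrableOn.congr_fun ((integrableOn_Ioi_mul_exp_neg (log_nonneg one_le_two)).const_mul 2)
    (fun y _ => by ring) measurableSet_Ioi

lemma integral_id : ∫ y, y ∂envelopeLaw = AE := by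
  rw [integral_eq, AE_eq]
  simp_rw [mul_assoc, mul_comm (exp _)]
  rw [integral_const_mul, integral_Ioi_mul_exp_neg (log_nonneg one_le_two), ← mul_assoc,
    mul_comm 2, mul_assoc, two_mul_exp_neg_log_two, mul_one]

lemma integral_indicator_Ioi_sub {a : ℝ} (ha : log 2 ≤ a) (u : ℝ) :
    ∫ y, (Ioi a).indicator (fun y => y - u) y ∂envelopeLaw = HE a - u * sE a := by
  rw [integral_eq]
  simp_rw [← indicator_mul_right (Ioi a) (fun y => 2 * exp (-y)) (fun y => y - u)]
  rw [setIntegral_indicator measurableSet_Ioi, inter_eq_right.mpr (Ioi_subset_Ioi ha)]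
  simp_rw [mul_assoc, mul_comm (exp _)]
  rw [integral_const_mul, integral_Ioi_sub_mul_exp_neg ((log_nonneg one_le_two).trans ha),
    HE_eq_of_log_two_le ha, sE_eq_of_log_two_le ha]
  ring

end envelopeLaw

noncomputable def reflectBelow (a y : ℝ) : ℝ := if a < y then y else -y

lemma measurable_reflectBelow (a : ℝ) : Measurable (reflectBelow a) :=
  Measurable.ite measurableSet_Ioi measurable_id measurable_neg

lemma abs_reflectBelow (a y : ℝ) : |reflectBelow a y| = |y| := by
  unfold reflectBelow
  split_ifs <;> simp

lemma reflectBelow_eq_two_mul_indicator_sub (a y : ℝ) :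
    reflectBelow a y = 2 * (Ioi a).indicator (fun y => y) y - y := by
  simp only [reflectBelow, indicator_apply, mem_Ioi]
  split_ifs <;> ring

lemma indicator_Ioi_sub_le_max_reflectBelow_sub (a u y : ℝ) :
    (Ioi a).indicator (fun y => y - u) y ≤ max (reflectBelow a y - u) 0 := by
  simp only [reflectBelow, indicator_apply, mem_Ioi]
  split_ifs <;> simp_all

noncomputable def witnessLaw (a : ℝ) : Measure ℝ := envelopeLaw.map (reflectBelow a)

namespace witnessLaw

instance (a : ℝ) : IsProbabilityMeasure (witnessLaw a) :=
  Measure.isProbabilityMeasure_map (measurable_reflectBelow a).aemeasurable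

lemma apply_lt_abs (a t : ℝ) : witnessLaw a {x | t < |x|} = ENNReal.ofReal (sE t) := by
  rw [witnessLaw, Measure.map_apply (measurable_reflectBelow a)
    (measurableSet_lt measurable_const continuous_abs.measurable), ← envelopeLaw.apply_Ioi]
  simp only [preimage, mem_ofPred_eq, abs_reflectBelow]
  refine measure_congr ?_
  filter_upwards [envelopeLaw.ae_log_two_lt] with y hy
  change (t < |y|) = (t < y)
  rw [abs_of_pos ((log_nonneg one_le_two).trans_lt hy)]

lemma integrable_id (a : ℝ) : Integrable (fun x => x) (witnessLaw a) := by
  rw [witnessLaw, integrable_map_measure measurable_id'.aestronglyMeasurable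
    (measurable_reflectBelow a).aemeasurable]
  refine envelopeLaw.integrable_id.mono (measurable_reflectBelow a).aestronglyMeasurable
    (ae_of_all _ fun y => ?_)
  simp [abs_reflectBelow]

lemma integral_id {a : ℝ} (ha : log 2 ≤ a) : ∫ x, x ∂witnessLaw a = 2 * HE a - AE := by
  have hupper := envelopeLaw.integral_indicator_Ioi_sub ha 0
  simp only [sub_zero, zero_mul] at hupper
  rw [witnessLaw, integral_map (measurable_reflectBelow a).aemeasurable
    measurable_id'.aestronglyMeasurable]
  simp_rw [reflectBelow_eq_two_mul_indicator_sub]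
  rw [integral_sub ((envelopeLaw.integrable_id.indicator measurableSet_Ioi).const_mul 2)
    envelopeLaw.integrable_id, integral_const_mul, hupper, envelopeLaw.integral_id]

lemma HE_sub_mul_sE_le_integral_max_sub {a : ℝ} (ha : log 2 ≤ a) (u : ℝ) :
    HE a - u * sE a ≤ ∫ x, max (x - u) 0 ∂witnessLaw a := by
  rw [← envelopeLaw.integral_indicator_Ioi_sub ha u, witnessLaw,
    integral_map (measurable_reflectBelow a).aemeasurable (by fun_prop)]
  refine integral_mono ((envelopeLaw.integrable_id.sub (integrable_const u)).indicator
    measurableSet_Ioi) ?_ (indicator_Ioi_sub_le_max_reflectBelow_sub a u)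
  exact (((integrable_map_measure (by fun_prop) (measurable_reflectBelow a).aemeasurable).mp
    (integrable_id a)).sub (integrable_const u)).pos_part

end witnessLaw

lemma integral_laplaceMeasure_max_sub {w : ℝ} (hw : 0 ≤ w) :
    ∫ x, max (x - w) 0 ∂laplaceMeasure = exp (-w) / 2 := by
  have hdensity : ∀ x, (1 / 2) * exp (-|x|) * max (x - w) 0 =
      (Ioi w).indicator (fun x => (1 / 2) * ((x - w) * exp (-x))) x := by
    intro x
    rcases le_or_gt x w with hx | hx
    · rw [indicator_of_notMem (show x ∉ Ioi w from not_lt.mpr hx), max_eq_right (by linarith),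
        mul_zero]
    · rw [indicator_of_mem (show x ∈ Ioi w from hx), abs_of_pos (hw.trans_lt hx),
        max_eq_left (by linarith)]
      ring
  rw [laplaceMeasure, integral_withDensity_ofReal (by fun_prop) (fun _ => by positivity)]
  simp_rw [hdensity]
  rw [integral_indicator measurableSet_Ioi, integral_const_mul, integral_Ioi_sub_mul_exp_neg hw]
  ring

theorem stmt14_general
    (aE pE wE cE : ℝ)
    (hHaE : HE aE = AE / 2)
    (hpE : pE = 2 * Real.exp (-aE))
    (hwE : wE = Real.log (1 / (2 * pE)))
    (hcE : cE = (AE / 2) / (pE * (1 + wE)))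
    (c : ℝ) (hc_pos : 0 < c) (hc_lt : c < cE) :
    ∃ ν : Measure ℝ, IsProbabilityMeasure ν ∧
      Integrable (fun x => x) ν ∧
      (∫ x, x ∂ν) = 0 ∧
      (∀ t : ℝ, 0 ≤ t → ν {x | t < |x|} ≤ ENNReal.ofReal (sE t)) ∧
      (∫ x, max (c * x - c * wE) 0 ∂laplaceMeasure) < ∫ x, max (x - c * wE) 0 ∂ν := by
  have ha : log 2 < aE := log_two_lt_of_HE_eq_half hHaE
  have hpE_pos : 0 < pE := by rw [hpE]; positivity
  have hsE : sE aE = pE := by rw [sE_eq_of_log_two_le ha.le, hpE]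
  have hHE : pE * (1 + aE) = (log 2 + 1) / 2 := by
    rw [← AE_eq, ← hHaE, HE_eq_of_log_two_le ha.le, hpE]
    ring
  have hexp : exp (-wE) = 2 * pE := by
    rw [hwE, one_div, log_inv, neg_neg, exp_log (by positivity)]
  have h2pE : 2 * pE < 1 := by nlinarith [log_pos one_lt_two]
  have hwE_pos : 0 < wE := by
    rwa [← neg_neg wE, neg_pos, ← exp_lt_one_iff, hexp]
  have hc : c * (pE * (1 + wE)) < AE / 2 := by
    rwa [hcE, lt_div_iff₀ (by positivity)] at hc_lt
  have hlaplace : ∫ x, max (c * x - c * wE) 0 ∂laplaceMeasure = c * pE := by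
    have hscale (x : ℝ) : max (c * x - c * wE) 0 = c * max (x - wE) 0 := by
      rw [mul_max_of_nonneg _ _ hc_pos.le, mul_sub, mul_zero]
    rw [funext hscale, integral_const_mul, integral_laplaceMeasure_max_sub hwE_pos.le, hexp]
    ring
  refine ⟨witnessLaw aE, inferInstance, witnessLaw.integrable_id aE, ?_,
    fun t _ => (witnessLaw.apply_lt_abs aE t).le, ?_⟩
  · rw [witnessLaw.integral_id ha.le, hHaE]
    ring
  · calc ∫ x, max (c * x - c * wE) 0 ∂laplaceMeasure = c * pE := hlaplace
      _ < HE aE - c * wE * sE aE := by rw [hHaE, hsE]; linarith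
      _ ≤ ∫ x, max (x - c * wE) 0 ∂witnessLaw aE :=
        witnessLaw.HE_sub_mul_sE_le_integral_max_sub ha.le _

/-- Sharpness of the sub-exponential comparison constant: for every `0 < c < c_E` there is
an integrable mean-zero random variable `X⋆` (given here by its law `ν` on `ℝ`) with
`P(|X⋆| > t) ≤ min{1, 2e^{-t}}` for all `t ≥ 0` such that, for the convex function
`f(x) = max(x − c w_E, 0)`, one has `E[f(X⋆)] > E[f(cL)]`, with `L` standard Laplace; in
particular `X⋆` is not dominated by `cL` in the convex order. -/
theorem stmt14
    (aE pE wE cE : ℝ)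
    (haE : 0 < aE) (hHaE : HE aE = AE / 2)
    (hpE : pE = 2 * Real.exp (-aE))
    (hwE : wE = Real.log (1 / (2 * pE)))
    (hcE : cE = (AE / 2) / (pE * (1 + wE)))
    (c : ℝ) (hc_pos : 0 < c) (hc_lt : c < cE) :
    ∃ ν : Measure ℝ, IsProbabilityMeasure ν ∧
      Integrable (fun x => x) ν ∧
      (∫ x, x ∂ν) = 0 ∧
      (∀ t : ℝ, 0 ≤ t → ν {x | t < |x|} ≤ ENNReal.ofReal (sE t)) ∧
      (∫ x, max (c * x - c * wE) 0 ∂laplaceMeasure) < ∫ x, max (x - c * wE) 0 ∂ν :=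
  stmt14_general aE pE wE cE hHaE hpE hwE hcE c hc_pos hc_lt
end
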